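/- Let r, s > 1 with 1/r + 1/s = 1, let d = d_p·h, and let the Gaussian RBF kernel 𝔎_RBF(q, k) = exp(−‖q − k‖₂²/(2σ²)) with any σ > 0 be used in the attention. Let W = {(W_i^q, W_i^k, W_i^v)}_{i=1}^h be a parameter tuple with ‖(W_i^v)ᵀ‖_r ≤ ω_i^v for all i ∈ [h]. Then for every X ∈ ℝ^{L×d}: ‖mha(X; W)ᵀ‖_{r,∞} ≤ (Σ_{i=1}^h ω_i^v) · ‖Xᵀ‖_{r,∞}, and consequently ‖(mha(X; W) + X)ᵀ‖_{r,∞} ≤ (1 + Σ_{i=1}^h ω_i^v) · ‖Xᵀ‖_{r,∞}. -/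

import Mathlib

open Matrix

/-- The vector `ℓ_r`-norm on `Fin m → ℝ`. -/
noncomputable def lrNorm {m : ℕ} (r : ℝ) (v : Fin m → ℝ) : ℝ :=
  (∑ i, |v i| ^ r) ^ (1 / r)

/-- The matrix `(r,s)`-norm: the `ℓ_s`-norm of the `ℓ_r`-norms of the columns. -/
noncomputable def matNormRS {m n : ℕ} (r s : ℝ) (M : Matrix (Fin m) (Fin n) ℝ) : ℝ :=
  (∑ j, lrNorm r (fun i => M i j) ^ s) ^ (1 / s)

/-- The matrix `(r,∞)`-norm: maximum of the `ℓ_r`-norms of the columns. -/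
noncomputable def matNormRInf {m n : ℕ} (r : ℝ) (M : Matrix (Fin m) (Fin n) ℝ) : ℝ :=
  ⨆ j, lrNorm r (fun i => M i j)

/-- The `(r,r)`-operator norm `sup_{u ≠ 0} ‖Mu‖_r / ‖u‖_r` (with the convention `0/0 = 0`). -/
noncomputable def matOpNorm {m n : ℕ} (r : ℝ) (M : Matrix (Fin m) (Fin n) ℝ) : ℝ :=
  ⨆ u : Fin n → ℝ, lrNorm r (M.mulVec u) / lrNorm r u

/-- The Gaussian RBF kernel `exp(−‖q−k‖₂²/(2σ²))`. -/
noncomputable def rbf {dp : ℕ} (σ : ℝ) (q k : Fin dp → ℝ) : ℝ :=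
  Real.exp (-(∑ i, (q i - k i) ^ 2) / (2 * σ ^ 2))

/-- Sequence-to-sequence softmax attention: the `ℓ`-th row is `Vᵀ p^ℓ` where
`p^ℓ_m = 𝔎_RBF(k^m, q^ℓ)/Σ_{m'} 𝔎_RBF(k^{m'}, q^ℓ)`. -/
noncomputable def attnSM {L dp d : ℕ} (σ : ℝ) (Q K : Matrix (Fin L) (Fin dp) ℝ)
    (V : Matrix (Fin L) (Fin d) ℝ) : Matrix (Fin L) (Fin d) ℝ :=
  Matrix.of fun ℓ j => ∑ m, (rbf σ (K m) (Q ℓ) / ∑ m', rbf σ (K m') (Q ℓ)) * V m j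

/-- Multihead attention `mha(X; W) = Σ_{i=1}^h attn_SM(XW_i^q, XW_i^k, XW_i^v)`. -/
noncomputable def mha {L d dp h : ℕ} (σ : ℝ)
    (Wq Wk : Fin h → Matrix (Fin d) (Fin dp) ℝ)
    (Wv : Fin h → Matrix (Fin d) (Fin d) ℝ)
    (X : Matrix (Fin L) (Fin d) ℝ) : Matrix (Fin L) (Fin d) ℝ :=
  ∑ i, attnSM σ (X * Wq i) (X * Wk i) (X * Wv i)

section aux
variable {m n : ℕ} {r : ℝ}

lemma lrNorm_nonneg (v : Fin m → ℝ) : 0 ≤ lrNorm r v :=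
  Real.rpow_nonneg (Finset.sum_nonneg fun i _ => Real.rpow_nonneg (abs_nonneg _) r) _

lemma lrNorm_zero (hr : 0 < r) : lrNorm r (fun _ => (0:ℝ) : Fin m → ℝ) = 0 := by
  simp [lrNorm, Real.zero_rpow hr.ne', Real.zero_rpow (inv_ne_zero hr.ne')]

lemma abs_le_lrNorm (hr : 0 < r) (v : Fin m → ℝ) (i : Fin m) : |v i| ≤ lrNorm r v := by
  have h1 : |v i| = (|v i| ^ r) ^ (1 / r) := by
    rw [one_div, Real.rpow_rpow_inv (abs_nonneg _) hr.ne']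
  rw [h1, lrNorm]
  apply Real.rpow_le_rpow (Real.rpow_nonneg (abs_nonneg _) _)
    (Finset.single_le_sum (f := fun j => |v j| ^ r)
      (fun j _ => Real.rpow_nonneg (abs_nonneg _) _) (Finset.mem_univ i))
    (by positivity)

lemma lrNorm_eq_zero (hr : 0 < r) {v : Fin m → ℝ} (h : lrNorm r v = 0) : v = fun _ => 0 := by
  funext i
  have := abs_le_lrNorm hr v i
  rw [h] at this
  exact abs_nonpos_iff.mp this

lemma lrNorm_mono (hr : 0 < r) {v w : Fin m → ℝ} (h : ∀ i, |v i| ≤ |w i|) :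
    lrNorm r v ≤ lrNorm r w := by
  apply Real.rpow_le_rpow (Finset.sum_nonneg fun i _ => Real.rpow_nonneg (abs_nonneg _) _)
    (Finset.sum_le_sum fun i _ => Real.rpow_le_rpow (abs_nonneg _) (h i) hr.le) (by positivity)

lemma lrNorm_smul (hr : 0 < r) (c : ℝ) (v : Fin m → ℝ) :
    lrNorm r (fun i => c * v i) = |c| * lrNorm r v := by
  have h1 : ∀ i, |c * v i| ^ r = |c| ^ r * |v i| ^ r := fun i => by
    rw [abs_mul, Real.mul_rpow (abs_nonneg _) (abs_nonneg _)]
  simp only [lrNorm, h1, ← Finset.mul_sum]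
  rw [Real.mul_rpow (Real.rpow_nonneg (abs_nonneg _) _)
    (Finset.sum_nonneg fun i _ => Real.rpow_nonneg (abs_nonneg _) _),
    one_div, Real.rpow_rpow_inv (abs_nonneg _) hr.ne']

lemma lrNorm_add_le (hr : 1 ≤ r) (v w : Fin m → ℝ) :
    lrNorm r (fun i => v i + w i) ≤ lrNorm r v + lrNorm r w :=
  Real.Lp_add_le Finset.univ v w hr

lemma lrNorm_sum_le (hr : 1 ≤ r) {ι : Type*} (s : Finset ι) (f : ι → Fin m → ℝ) :
    lrNorm r (fun j => ∑ i ∈ s, f i j) ≤ ∑ i ∈ s, lrNorm r (f i) := by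
  classical
  induction s using Finset.induction with
  | empty => simp [lrNorm_zero (lt_of_lt_of_le one_pos hr)]
  | insert _ _ hx ih =>
    rename_i a t
    simp only [Finset.sum_insert hx]
    exact le_trans (lrNorm_add_le hr _ _) (by linarith)

lemma matOpNorm_nonneg (M : Matrix (Fin m) (Fin n) ℝ) : 0 ≤ matOpNorm r M :=
  Real.iSup_nonneg fun u => div_nonneg (lrNorm_nonneg _) (lrNorm_nonneg _)

lemma lrNorm_mulVec_le_crude (hr : 1 ≤ r) (M : Matrix (Fin m) (Fin n) ℝ) (u : Fin n → ℝ) :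
    lrNorm r (M.mulVec u) ≤ lrNorm r (fun i => ∑ j, |M i j|) * lrNorm r u := by
  have hr0 : 0 < r := lt_of_lt_of_le one_pos hr
  have h1 : ∀ i, |M.mulVec u i| ≤ (∑ j, |M i j|) * lrNorm r u := by
    intro i
    have hmv : M.mulVec u i = ∑ j, M i j * u j := rfl
    rw [hmv]
    calc |∑ j, M i j * u j| ≤ ∑ j, |M i j * u j| := Finset.abs_sum_le_sum_abs _ _
      _ ≤ ∑ j, |M i j| * lrNorm r u := by
          refine Finset.sum_le_sum fun j _ => ?_
          rw [abs_mul]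
          exact mul_le_mul_of_nonneg_left (abs_le_lrNorm hr0 u j) (abs_nonneg _)
      _ = (∑ j, |M i j|) * lrNorm r u := (Finset.sum_mul _ _ _).symm
  calc lrNorm r (M.mulVec u) ≤ lrNorm r (fun i => lrNorm r u * (∑ j, |M i j|)) := by
        refine lrNorm_mono hr0 fun i => ?_
        rw [mul_comm]
        refine le_trans (h1 i) (le_abs_self _)
    _ = lrNorm r u * lrNorm r (fun i => ∑ j, |M i j|) := by
        rw [lrNorm_smul hr0, abs_of_nonneg (lrNorm_nonneg _)]
    _ = _ := mul_comm _ _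

lemma lrNorm_mulVec_le (hr : 1 ≤ r) (M : Matrix (Fin m) (Fin n) ℝ) (u : Fin n → ℝ) :
    lrNorm r (M.mulVec u) ≤ matOpNorm r M * lrNorm r u := by
  have hr0 : 0 < r := lt_of_lt_of_le one_pos hr
  set C := lrNorm r (fun i => ∑ j, |M i j|) with hC
  have hbdd : BddAbove (Set.range fun u : Fin n → ℝ => lrNorm r (M.mulVec u) / lrNorm r u) := by
    refine ⟨C, ?_⟩
    rintro x ⟨w, rfl⟩
    dsimp only
    rcases eq_or_lt_of_le (lrNorm_nonneg (r := r) w) with h0 | h0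
    · have hw : w = fun _ => 0 := lrNorm_eq_zero hr0 h0.symm
      subst hw
      have : M.mulVec (fun _ => 0) = fun _ => 0 := by
        funext i; simp [Matrix.mulVec, dotProduct]
      rw [this, lrNorm_zero hr0]
      simp only [zero_div]
      exact lrNorm_nonneg _
    · rw [div_le_iff₀ h0]
      exact lrNorm_mulVec_le_crude hr M w
  rcases eq_or_lt_of_le (lrNorm_nonneg (r := r) u) with h0 | h0
  · have hu : u = fun _ => 0 := lrNorm_eq_zero hr0 h0.symm
    subst hu
    have : M.mulVec (fun _ => 0) = fun _ => 0 := by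
      funext i; simp [Matrix.mulVec, dotProduct]
    rw [this, lrNorm_zero hr0, ← h0, mul_zero]
  · rw [← div_le_iff₀ h0]
    exact le_ciSup hbdd u

lemma col_le_matNormRInf (M : Matrix (Fin m) (Fin n) ℝ) (j : Fin n) :
    lrNorm r (fun i => M i j) ≤ matNormRInf r M :=
  le_ciSup (f := fun j => lrNorm r fun i => M i j) (Set.Finite.bddAbove (Set.finite_range _)) j

lemma matNormRInf_nonneg (M : Matrix (Fin m) (Fin n) ℝ) : 0 ≤ matNormRInf r M :=
  Real.iSup_nonneg fun j => lrNorm_nonneg _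

end aux

/-- Magnitude bound for multihead attention (with and without the skip
connection). -/
theorem mha_magnitude_bound
    {L dp h d : ℕ} (r s σ : ℝ) (hr : 1 < r) (hs : 1 < s) (hrs : 1 / r + 1 / s = 1)
    (hd : d = dp * h) (hσ : 0 < σ)
    (Wq Wk : Fin h → Matrix (Fin d) (Fin dp) ℝ)
    (Wv : Fin h → Matrix (Fin d) (Fin d) ℝ)
    (ωv : Fin h → ℝ) (hωv : ∀ i, matOpNorm r (Wv i)ᵀ ≤ ωv i)
    (X : Matrix (Fin L) (Fin d) ℝ) :
    matNormRInf r (mha σ Wq Wk Wv X)ᵀ ≤ (∑ i, ωv i) * matNormRInf r Xᵀ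
      ∧ matNormRInf r (mha σ Wq Wk Wv X + X)ᵀ ≤ (1 + ∑ i, ωv i) * matNormRInf r Xᵀ := by
  have hr1 : 1 ≤ r := hr.le
  have hr0 : 0 < r := lt_trans one_pos hr
  set N := matNormRInf r Xᵀ with hNdef
  have hN0 : 0 ≤ N := matNormRInf_nonneg _
  have hω0 : ∀ i, 0 ≤ ωv i := fun i => le_trans (matOpNorm_nonneg _) (hωv i)
  have hsum0 : 0 ≤ ∑ i, ωv i := Finset.sum_nonneg fun i _ => hω0 i
  have hXrow : ∀ ℓ : Fin L, lrNorm r (X ℓ) ≤ N := by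
    intro ℓ
    have := col_le_matNormRInf (r := r) Xᵀ ℓ
    simpa using this
  -- per-head row bound
  have hhead : ∀ (i : Fin h) (ℓ : Fin L),
      lrNorm r (fun j => attnSM σ (X * Wq i) (X * Wk i) (X * Wv i) ℓ j) ≤ ωv i * N := by
    intro i ℓ
    set Q := X * Wq i
    set K := X * Wk i
    set V := X * Wv i with hVdef
    set S := ∑ m', rbf σ (K m') (Q ℓ) with hSdef
    have hSpos : 0 < S := by
      refine Finset.sum_pos (fun m _ => Real.exp_pos _) ⟨ℓ, Finset.mem_univ ℓ⟩
    set p : Fin L → ℝ := fun m => rbf σ (K m) (Q ℓ) / S with hpdef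
    have hp0 : ∀ m, 0 ≤ p m := fun m => div_nonneg (Real.exp_pos _).le hSpos.le
    have hpsum : ∑ m, p m = 1 := by
      rw [hpdef]
      simp only [← Finset.sum_div]
      exact div_self hSpos.ne'
    have hrow : (fun j => attnSM σ Q K V ℓ j) = fun j => ∑ m, p m * V m j := rfl
    rw [hrow]
    have hVm : ∀ m, lrNorm r (V m) ≤ ωv i * N := by
      intro m
      have hVeq : V m = (Wv i)ᵀ.mulVec (X m) := by
        funext j
        simp [hVdef, Matrix.mul_apply, Matrix.mulVec, dotProduct, mul_comm]
      rw [hVeq]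
      calc lrNorm r ((Wv i)ᵀ.mulVec (X m)) ≤ matOpNorm r (Wv i)ᵀ * lrNorm r (X m) :=
            lrNorm_mulVec_le hr1 _ _
        _ ≤ ωv i * N :=
            mul_le_mul (hωv i) (hXrow m) (lrNorm_nonneg _) (hω0 i)
    calc lrNorm r (fun j => ∑ m, p m * V m j)
        ≤ ∑ m, lrNorm r (fun j => p m * V m j) :=
          lrNorm_sum_le hr1 Finset.univ fun m j => p m * V m j
      _ = ∑ m, p m * lrNorm r (V m) := by
          refine Finset.sum_congr rfl fun m _ => ?_
          rw [lrNorm_smul hr0, abs_of_nonneg (hp0 m)]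
      _ ≤ ∑ m, p m * (ωv i * N) :=
          Finset.sum_le_sum fun m _ => mul_le_mul_of_nonneg_left (hVm m) (hp0 m)
      _ = (∑ m, p m) * (ωv i * N) := (Finset.sum_mul _ _ _).symm
      _ = ωv i * N := by rw [hpsum, one_mul]
  -- mha row bound
  have hrow : ∀ ℓ : Fin L,
      lrNorm r (fun j => mha σ Wq Wk Wv X ℓ j) ≤ (∑ i, ωv i) * N := by
    intro ℓ
    have hmeq : (fun j => mha σ Wq Wk Wv X ℓ j)
        = fun j => ∑ i, attnSM σ (X * Wq i) (X * Wk i) (X * Wv i) ℓ j := by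
      funext j
      simp [mha, Matrix.sum_apply]
    rw [hmeq]
    calc lrNorm r (fun j => ∑ i, attnSM σ (X * Wq i) (X * Wk i) (X * Wv i) ℓ j)
        ≤ ∑ i, lrNorm r (fun j => attnSM σ (X * Wq i) (X * Wk i) (X * Wv i) ℓ j) :=
          lrNorm_sum_le hr1 Finset.univ _
      _ ≤ ∑ i, ωv i * N := Finset.sum_le_sum fun i _ => hhead i ℓ
      _ = (∑ i, ωv i) * N := (Finset.sum_mul _ _ _).symm
  constructor
  · rcases isEmpty_or_nonempty (Fin L) with hL | hL
    · rw [matNormRInf, Real.iSup_of_isEmpty]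
      exact mul_nonneg hsum0 hN0
    · exact ciSup_le fun ℓ => hrow ℓ
  · rcases isEmpty_or_nonempty (Fin L) with hL | hL
    · rw [matNormRInf, Real.iSup_of_isEmpty]
      exact mul_nonneg (by linarith) hN0
    · refine ciSup_le fun ℓ => ?_
      have heq : (fun i => (mha σ Wq Wk Wv X + X)ᵀ i ℓ)
          = fun j => mha σ Wq Wk Wv X ℓ j + X ℓ j := rfl
      rw [heq]
      calc lrNorm r (fun j => mha σ Wq Wk Wv X ℓ j + X ℓ j)
          ≤ lrNorm r (fun j => mha σ Wq Wk Wv X ℓ j) + lrNorm r (X ℓ) :=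
            lrNorm_add_le hr1 _ _
        _ ≤ (∑ i, ωv i) * N + N := add_le_add (hrow ℓ) (hXrow ℓ)
        _ = (1 + ∑ i, ωv i) * N := by ring
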